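/- arXiv:2308.14386 — 9 statements merged into one kernel-verified Lean document; each statement's English description precedes it below -/
import Mathlib

section
/- If θ₁, θ₂, θ₃ ∈ (0,π) satisfy θ₁+θ₂+θ₃ > π, θ₁+θ₂ < θ₃+π, θ₂+θ₃ < θ₁+π, and θ₃+θ₁ < θ₂+π, then the 3×3 symmetric real matrix J = [[1, −cos θ₃, −cos θ₂], [−cos θ₃, 1, −cos θ₁], [−cos θ₂, −cos θ₁, 1]] is positive definite. -/
/-!
The quadratic form of `J` is positive definite as soon as its leading `2 × 2` minor
`sin² θ₃` and its determinant are positive (complete the square twice). With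
`σ = θ₁ + θ₂ + θ₃`, the determinant factors as
`-4 cos (σ/2) cos (σ/2 - θ₁) cos (σ/2 - θ₂) cos (σ/2 - θ₃)`, and condition (c2)
places `σ/2` in `(π/2, 3π/2)` and each `σ/2 - θᵢ` in `(-π/2, π/2)`.
-/

open Real Matrix

theorem Matrix.posDef_unitDiag_fin_three {a b c : ℝ} (ha : a ^ 2 < 1)
    (hdet : 0 < !![1, a, b; a, 1, c; b, c, 1].det) :
    (!![1, a, b; a, 1, c; b, c, 1]).PosDef := by
  rw [det_fin_three] at hdet
  simp only [of_apply, cons_val', cons_val_zero, cons_val_one, cons_val_two, empty_val',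
    cons_val_fin_one, head_cons, tail_cons, head_fin_const] at hdet
  refine posDef_iff_dotProduct_mulVec.mpr ⟨?_, fun x hx ↦ ?_⟩
  · ext i j
    fin_cases i <;> fin_cases j <;> rfl
  have hq : star x ⬝ᵥ (!![1, a, b; a, 1, c; b, c, 1] *ᵥ x) =
      x 0 ^ 2 + x 1 ^ 2 + x 2 ^ 2 + 2 * a * x 0 * x 1 + 2 * b * x 0 * x 2 + 2 * c * x 1 * x 2 := by
    simp only [star_trivial, dotProduct, mulVec, Fin.sum_univ_three, of_apply, cons_val',
      cons_val_zero, cons_val_one, cons_val_two, empty_val', cons_val_fin_one, head_cons,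
      tail_cons, head_fin_const]
    ring
  rw [hq]
  have hx : x 0 ≠ 0 ∨ x 1 ≠ 0 ∨ x 2 ≠ 0 := by
    by_contra! h
    exact hx (funext fun i ↦ by fin_cases i <;> simp [h.1, h.2.1, h.2.2])
  have ha' : 0 < 1 - a ^ 2 := by linarith
  have hsq : (1 - a ^ 2) * (x 0 ^ 2 + x 1 ^ 2 + x 2 ^ 2 + 2 * a * x 0 * x 1 + 2 * b * x 0 * x 2
      + 2 * c * x 1 * x 2) = (1 - a ^ 2) * (x 0 + a * x 1 + b * x 2) ^ 2
        + ((1 - a ^ 2) * x 1 + (c - a * b) * x 2) ^ 2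
        + (1 - a ^ 2 - b ^ 2 - c ^ 2 + 2 * a * b * c) * x 2 ^ 2 := by ring
  refine pos_of_mul_pos_right (hsq ▸ ?_) ha'.le
  have hu := mul_nonneg ha'.le (sq_nonneg (x 0 + a * x 1 + b * x 2))
  have hv := sq_nonneg ((1 - a ^ 2) * x 1 + (c - a * b) * x 2)
  rcases eq_or_ne (x 2) 0 with h2 | h2
  · rcases eq_or_ne (x 1) 0 with h1 | h1
    · have h0 : x 0 ≠ 0 := by tauto
      simp only [h1, h2, mul_zero, add_zero, zero_pow two_ne_zero]
      positivity
    · simp only [h2]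
      have : 0 < ((1 - a ^ 2) * x 1) ^ 2 := by positivity
      nlinarith
  · linarith [mul_pos hdet (sq_pos_of_ne_zero h2)]

theorem det_gram_eq_neg_four_mul_cos (θ₁ θ₂ θ₃ : ℝ) :
    !![1, -cos θ₃, -cos θ₂; -cos θ₃, 1, -cos θ₁; -cos θ₂, -cos θ₁, 1].det =
      -4 * cos ((θ₁ + θ₂ + θ₃) / 2) * cos ((θ₂ + θ₃ - θ₁) / 2) * cos ((θ₃ + θ₁ - θ₂) / 2)
        * cos ((θ₁ + θ₂ - θ₃) / 2) := by
  have hfactor : !![1, -cos θ₃, -cos θ₂; -cos θ₃, 1, -cos θ₁; -cos θ₂, -cos θ₁, 1].det =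
      -((cos θ₁ + cos (θ₂ + θ₃)) * (cos θ₁ + cos (θ₂ - θ₃))) := by
    rw [det_fin_three, cos_add, cos_sub]
    simp only [of_apply, cons_val', cons_val_zero, cons_val_one, cons_val_two, empty_val',
      cons_val_fin_one, head_cons, tail_cons, head_fin_const]
    linear_combination (cos θ₃ ^ 2 - 1) * sin_sq_add_cos_sq θ₂ - sin θ₂ ^ 2 * sin_sq_add_cos_sq θ₃
  rw [hfactor, cos_add_cos, cos_add_cos, ← cos_neg ((θ₁ - (θ₂ + θ₃)) / 2)]
  ring_nf

theorem gram_matrix_posDef_of_c2_general (θ₁ θ₂ θ₃ : ℝ)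
    (hsum : θ₁ + θ₂ + θ₃ > π)
    (h₁₂ : θ₁ + θ₂ < θ₃ + π) (h₂₃ : θ₂ + θ₃ < θ₁ + π) (h₃₁ : θ₃ + θ₁ < θ₂ + π) :
    (!![(1 : ℝ), -cos θ₃, -cos θ₂;
        -cos θ₃, 1, -cos θ₁;
        -cos θ₂, -cos θ₁, 1]).PosDef := by
  have hsin₃ : 0 < sin θ₃ := sin_pos_of_pos_of_lt_pi (by linarith) (by linarith)
  refine posDef_unitDiag_fin_three (by nlinarith [sin_sq_add_cos_sq θ₃]) ?_
  rw [det_gram_eq_neg_four_mul_cos]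
  have hσ : cos ((θ₁ + θ₂ + θ₃) / 2) < 0 :=
    cos_neg_of_pi_div_two_lt_of_lt (by linarith) (by linarith)
  have hc₁ : 0 < cos ((θ₂ + θ₃ - θ₁) / 2) := cos_pos_of_mem_Ioo ⟨by linarith, by linarith⟩
  have hc₂ : 0 < cos ((θ₃ + θ₁ - θ₂) / 2) := cos_pos_of_mem_Ioo ⟨by linarith, by linarith⟩
  have hc₃ : 0 < cos ((θ₁ + θ₂ - θ₃) / 2) := cos_pos_of_mem_Ioo ⟨by linarith, by linarith⟩
  linarith [mul_pos (mul_pos (mul_pos (neg_pos.2 hσ) hc₁) hc₂) hc₃]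

/-- Under condition (c2), the Gram matrix of the three geodesic planes is positive
definite. -/
theorem gram_matrix_posDef_of_c2 (θ₁ θ₂ θ₃ : ℝ)
    (h₁ : θ₁ ∈ Set.Ioo 0 π) (h₂ : θ₂ ∈ Set.Ioo 0 π) (h₃ : θ₃ ∈ Set.Ioo 0 π)
    (hsum : θ₁ + θ₂ + θ₃ > π)
    (h₁₂ : θ₁ + θ₂ < θ₃ + π) (h₂₃ : θ₂ + θ₃ < θ₁ + π) (h₃₁ : θ₃ + θ₁ < θ₂ + π) :
    (!![(1 : ℝ), -cos θ₃, -cos θ₂;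
        -cos θ₃, 1, -cos θ₁;
        -cos θ₂, -cos θ₁, 1]).PosDef :=
  gram_matrix_posDef_of_c2_general θ₁ θ₂ θ₃ hsum h₁₂ h₂₃ h₃₁
end

section
/- For all real numbers φ₁, φ₂, φ₃, the determinant of the 3×3 symmetric matrix A = [[1, cos φ₃, cos φ₂], [cos φ₃, 1, cos φ₁], [cos φ₂, cos φ₁, 1]] equals 4 · sin((φ₁+φ₂+φ₃)/2) · sin((φ₁+φ₂−φ₃)/2) · sin((φ₂+φ₃−φ₁)/2) · sin((φ₃+φ₁−φ₂)/2). -/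
/-!
Product-to-sum, `2 sin x sin y = cos(x - y) - cos(x + y)` pairs the four
sines into `(cos φ₃ - cos (φ₁ + φ₂)) * (cos (φ₁ - φ₂) - cos φ₃)`, a difference of squares
`(sin φ₁ sin φ₂)² - (cos φ₃ - cos φ₁ cos φ₂)²`; with `sin² = 1 - cos²` this is
`1 + 2 cos φ₁ cos φ₂ cos φ₃ - cos² φ₁ - cos² φ₂ - cos² φ₃`, the determinant expanded.
-/

open Real Matrix

theorem det_symm_fin_three_of_diag_one {R : Type*} [CommRing R] (a b c : R) :
    !![1, c, b; c, 1, a; b, a, 1].det = 1 + 2 * a * b * c - a ^ 2 - b ^ 2 - c ^ 2 := by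
  rw [det_fin_three]
  simp only [of_apply, cons_val', cons_val_zero, cons_val_fin_one, cons_val_one, cons_val, mul_one,
    one_mul]
  ring

theorem Real.cos_sub_cos_add_mul_cos_sub_sub_cos (x y z : ℝ) :
    (cos z - cos (x + y)) * (cos (x - y) - cos z)
      = 1 + 2 * cos x * cos y * cos z - cos x ^ 2 - cos y ^ 2 - cos z ^ 2 := by
  rw [cos_add, cos_sub]
  linear_combination (1 - cos y ^ 2) * sin_sq_add_cos_sq x + sin x ^ 2 * sin_sq_add_cos_sq y

/-- Determinant identity for the Gram matrix of three unit vectors with pairwise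
angular distances `φ₁, φ₂, φ₃`. -/
theorem det_gram_matrix_cos_eq (φ₁ φ₂ φ₃ : ℝ) :
    (!![(1 : ℝ), cos φ₃, cos φ₂;
        cos φ₃, 1, cos φ₁;
        cos φ₂, cos φ₁, 1]).det
      = 4 * sin ((φ₁ + φ₂ + φ₃) / 2) * sin ((φ₁ + φ₂ - φ₃) / 2) *
          sin ((φ₂ + φ₃ - φ₁) / 2) * sin ((φ₃ + φ₁ - φ₂) / 2) := by
  have h₁ : 2 * sin ((φ₁ + φ₂ + φ₃) / 2) * sin ((φ₁ + φ₂ - φ₃) / 2)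
      = cos φ₃ - cos (φ₁ + φ₂) := by
    rw [two_mul_sin_mul_sin]; ring_nf
  have h₂ : 2 * sin ((φ₃ + φ₁ - φ₂) / 2) * sin ((φ₂ + φ₃ - φ₁) / 2)
      = cos (φ₁ - φ₂) - cos φ₃ := by
    rw [two_mul_sin_mul_sin]; ring_nf
  rw [det_symm_fin_three_of_diag_one, ← cos_sub_cos_add_mul_cos_sub_sub_cos, ← h₁, ← h₂]
  ring
end

section
/- If φ₁, φ₂, φ₃ ∈ (0,π) satisfy the strict triangle inequalities φ₁+φ₂ > φ₃, φ₂+φ₃ > φ₁, φ₃+φ₁ > φ₂, together with φ₁+φ₂+φ₃ < 2π, then the 3×3 symmetric real matrix A = [[1, cos φ₃, cos φ₂], [cos φ₃, 1, cos φ₁], [cos φ₂, cos φ₁, 1]] is positive definite. -/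
/-!
Write `a, b, c` for `cos φ₁, cos φ₂, cos φ₃`. Completing squares shows that a symmetric matrix
with unit diagonal is positive definite as soon as `c² < 1` and its determinant is positive.
The determinant `1 - a² - b² - c² + 2abc` factors as `(cos (φ₁ - φ₂) - c) * (c - cos (φ₁ + φ₂))`,
and both factors are positive because `cos` is strictly decreasing on `[0, π]`: the first since
`|φ₁ - φ₂| < φ₃`, the second since `φ₃ < φ₁ + φ₂ < 2π - φ₃`.
-/

open Real Matrix

lemma Real.cos_lt_cos_sub {x y z : ℝ} (hxy : |x - y| < z) (hz : z ≤ π) :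
    cos z < cos (x - y) := by
  rw [← cos_abs (x - y)]
  exact cos_lt_cos_of_nonneg_of_le_pi (abs_nonneg _) hz hxy

lemma Real.cos_lt_cos_of_lt_of_lt_two_pi_sub {w z : ℝ} (hz : 0 ≤ z) (hzw : z < w)
    (hw : w < 2 * π - z) : cos w < cos z := by
  rcases le_or_gt w π with hwπ | hπw
  · exact cos_lt_cos_of_nonneg_of_le_pi hz hwπ hzw
  · rw [← cos_two_pi_sub w]
    exact cos_lt_cos_of_nonneg_of_le_pi hz (by linarith) (by linarith)

lemma Real.cos_sq_lt_one_of_mem_Ioo {x : ℝ} (hx : x ∈ Set.Ioo 0 π) : cos x ^ 2 < 1 := by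
  have := sin_pos_of_pos_of_lt_pi hx.1 hx.2
  nlinarith [sin_sq_add_cos_sq x]

namespace Matrix

lemma det_unitDiag_fin_three (a b c : ℝ) :
    !![1, c, b; c, 1, a; b, a, 1].det = 1 - a ^ 2 - b ^ 2 - c ^ 2 + 2 * a * b * c := by
  rw [det_fin_three]
  simp only [of_apply, cons_val', cons_val_zero, cons_val_fin_one, cons_val_one, cons_val]
  ring

/-- The `LDLᵀ` decomposition of a symmetric `3 × 3` matrix with unit diagonal, cleared of the
pivot `1 - c²`. -/
lemma one_sub_sq_mul_quadForm_unitDiag_fin_three (a b c : ℝ) (x : Fin 3 → ℝ) :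
    (1 - c ^ 2) * (star x ⬝ᵥ (!![1, c, b; c, 1, a; b, a, 1] *ᵥ x)) =
      (1 - c ^ 2) * (x 0 + c * x 1 + b * x 2) ^ 2 + ((1 - c ^ 2) * x 1 + (a - b * c) * x 2) ^ 2
        + !![1, c, b; c, 1, a; b, a, 1].det * x 2 ^ 2 := by
  rw [det_unitDiag_fin_three]
  simp only [dotProduct, Pi.star_apply, star_trivial, mulVec, of_apply, cons_val',
    cons_val_fin_one, Fin.sum_univ_three, cons_val_zero, cons_val_one, cons_val]
  ring

lemma posDef_unitDiag_fin_three_s4 {a b c : ℝ} (hc : c ^ 2 < 1)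
    (hdet : 0 < !![1, c, b; c, 1, a; b, a, 1].det) :
    (!![1, c, b; c, 1, a; b, a, 1]).PosDef := by
  refine posDef_iff_dotProduct_mulVec.2 ⟨?_, fun x hx ↦ ?_⟩
  · ext i j
    fin_cases i <;> fin_cases j <;> rfl
  · have hc' : 0 < 1 - c ^ 2 := sub_pos.2 hc
    refine pos_of_mul_pos_right ?_ hc'.le
    rw [one_sub_sq_mul_quadForm_unitDiag_fin_three]
    by_cases h2 : x 2 = 0
    · by_cases h1 : x 1 = 0
      · have h0 : x 0 ≠ 0 := fun h0 ↦ hx (by ext i; fin_cases i <;> assumption)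
        simp only [h1, h2, mul_zero, add_zero]
        positivity
      · simp only [h2, mul_zero, add_zero]
        positivity
    · positivity

lemma det_cos_gram (x y z : ℝ) :
    !![1, cos z, cos y; cos z, 1, cos x; cos y, cos x, 1].det =
      (cos (x - y) - cos z) * (cos z - cos (x + y)) := by
  rw [det_unitDiag_fin_three, cos_sub, cos_add]
  linear_combination -(1 - cos y ^ 2) * sin_sq_add_cos_sq x - sin x ^ 2 * sin_sq_add_cos_sq y

end Matrix

theorem gram_matrix_cos_posDef_general (φ₁ φ₂ φ₃ : ℝ)
    (h₃ : φ₃ ∈ Set.Ioo 0 π)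
    (h₁₂ : φ₁ + φ₂ > φ₃) (h₂₃ : φ₂ + φ₃ > φ₁) (h₃₁ : φ₃ + φ₁ > φ₂)
    (hsum : φ₁ + φ₂ + φ₃ < 2 * π) :
    (!![(1 : ℝ), cos φ₃, cos φ₂;
        cos φ₃, 1, cos φ₁;
        cos φ₂, cos φ₁, 1]).PosDef := by
  refine posDef_unitDiag_fin_three_s4 (cos_sq_lt_one_of_mem_Ioo h₃) ?_
  rw [det_cos_gram]
  have hdiff : |φ₁ - φ₂| < φ₃ := abs_sub_lt_iff.2 ⟨by linarith, by linarith⟩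
  exact mul_pos (sub_pos.2 (cos_lt_cos_sub hdiff h₃.2.le))
    (sub_pos.2 (cos_lt_cos_of_lt_of_lt_two_pi_sub h₃.1.le h₁₂ (by linarith)))

/-- If `φ₁, φ₂, φ₃ ∈ (0,π)` satisfy the strict triangle inequalities and have sum
less than `2π`, the associated Gram matrix is positive definite. -/
theorem gram_matrix_cos_posDef (φ₁ φ₂ φ₃ : ℝ)
    (h₁ : φ₁ ∈ Set.Ioo 0 π) (h₂ : φ₂ ∈ Set.Ioo 0 π) (h₃ : φ₃ ∈ Set.Ioo 0 π)
    (h₁₂ : φ₁ + φ₂ > φ₃) (h₂₃ : φ₂ + φ₃ > φ₁) (h₃₁ : φ₃ + φ₁ > φ₂)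
    (hsum : φ₁ + φ₂ + φ₃ < 2 * π) :
    (!![(1 : ℝ), cos φ₃, cos φ₂;
        cos φ₃, 1, cos φ₁;
        cos φ₂, cos φ₁, 1]).PosDef :=
  gram_matrix_cos_posDef_general φ₁ φ₂ φ₃ h₃ h₁₂ h₂₃ h₃₁ hsum
end

section
/- Let θ₁₂, θ₂₃, θ₃₁ ∈ (0,π) satisfy θ₁₂+θ₂₃+θ₃₁ > π, θ₁₂+θ₂₃ < θ₃₁+π, θ₂₃+θ₃₁ < θ₁₂+π, and θ₃₁+θ₁₂ < θ₂₃+π, and let r₁, r₂, r₃ ∈ (0,π). Set a_μ = cos r_μ and x_μ = sin r_μ for μ = 1,2,3. Then sin²θ₁₂·x₁²x₂² + sin²θ₂₃·x₂²x₃² + sin²θ₃₁·x₃²x₁² − (2 + 2 cos θ₁₂ cos θ₂₃ cos θ₃₁)·x₁²x₂²x₃² + 2(cos θ₂₃ + cos θ₃₁ cos θ₁₂)·a₂a₃x₂x₃x₁² + 2(cos θ₃₁ + cos θ₁₂ cos θ₂₃)·a₃a₁x₃x₁x₂² + 2(cos θ₁₂ + cos θ₂₃ cos θ₃₁)·a₁a₂x₁x₂x₃²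 > 0. -/
/-!
Write `a_μ = cos r_μ`, `x_μ = sin r_μ` and `p, q, r` for `cos θ₁₂, cos θ₂₃, cos θ₃₁`. Using only
`a_μ² + x_μ² = 1`, the left-hand side is `Q(v) + D w²` with `w = x₁x₂x₃` and
`v = (a₁x₂x₃, a₂x₃x₁, a₃x₁x₂)`, where `D` is the determinant and `Q` the adjugate quadratic form of
`M = !![1, -p, -r; -p, 1, -q; -r, -q, 1]`. The identity
`D = -4 cos s cos (s - θ₁₂) cos (s - θ₂₃) cos (s - θ₃₁)`, `s` the half sum of the angles, shows that
condition (c2) makes `D` positive; then `M`, hence its adjugate, is positive definite, so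
`Q(v) ≥ 0` while `D w² > 0`.
-/

open Real

namespace ThreeCircle

section GramForm

variable (p q r : ℝ)

def gramDet : ℝ := 1 - p ^ 2 - q ^ 2 - r ^ 2 - 2 * p * q * r

def gramAdjForm (u v w : ℝ) : ℝ :=
  (1 - q ^ 2) * u ^ 2 + (1 - r ^ 2) * v ^ 2 + (1 - p ^ 2) * w ^ 2
    + 2 * (q + r * p) * v * w + 2 * (r + p * q) * w * u + 2 * (p + q * r) * u * v

theorem one_sub_sq_mul_gramAdjForm (u v w : ℝ) :
    (1 - q ^ 2) * gramAdjForm p q r u v w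
      = ((1 - q ^ 2) * u + (p + q * r) * v + (r + p * q) * w) ^ 2
        + gramDet p q r * ((v + q * w) ^ 2 + (1 - q ^ 2) * w ^ 2) := by
  unfold gramAdjForm gramDet
  ring

variable {p q r}

theorem gramAdjForm_nonneg (hq : q ^ 2 < 1) (hD : 0 ≤ gramDet p q r) (u v w : ℝ) :
    0 ≤ gramAdjForm p q r u v w := by
  have hq' : 0 < 1 - q ^ 2 := sub_pos.mpr hq
  refine nonneg_of_mul_nonneg_right ?_ hq'
  rw [one_sub_sq_mul_gramAdjForm]
  positivity

end GramForm

theorem gramDet_cos_eq (α β γ : ℝ) :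
    gramDet (cos α) (cos β) (cos γ)
      = -4 * cos ((α + β + γ) / 2) * cos ((α + β + γ) / 2 - α)
          * cos ((α + β + γ) / 2 - β) * cos ((α + β + γ) / 2 - γ) := by
  have hfactor : gramDet (cos α) (cos β) (cos γ)
      = -((cos α + cos (β + γ)) * (cos α + cos (β - γ))) := by
    unfold gramDet
    rw [cos_add, cos_sub]
    linear_combination (-(sin γ ^ 2)) * sin_sq_add_cos_sq β - (1 - cos β ^ 2) * sin_sq_add_cos_sq γ
  rw [hfactor, cos_add_cos, cos_add_cos, ← cos_neg ((α - (β + γ)) / 2)]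
  ring_nf

theorem gramDet_cos_pos {α β γ : ℝ} (hα : 0 < α) (hβ : 0 < β)
    (hsum : π < α + β + γ) (hαβ : α + β < γ + π) (hβγ : β + γ < α + π) (hγα : γ + α < β + π) :
    0 < gramDet (cos α) (cos β) (cos γ) := by
  have hs : cos ((α + β + γ) / 2) < 0 := cos_neg_of_pi_div_two_lt_of_lt (by linarith) (by linarith)
  have hα' : 0 < cos ((α + β + γ) / 2 - α) := cos_pos_of_mem_Ioo ⟨by linarith, by linarith⟩
  have hβ' : 0 < cos ((α + β + γ) / 2 - β) := cos_pos_of_mem_Ioo ⟨by linarith, by linarith⟩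
  have hγ' : 0 < cos ((α + β + γ) / 2 - γ) := cos_pos_of_mem_Ioo ⟨by linarith, by linarith⟩
  rw [gramDet_cos_eq]
  have := mul_pos (mul_pos (mul_pos (neg_pos.mpr hs) hα') hβ') hγ'
  linarith

theorem eq_gramAdjForm_add_gramDet_mul_sq {p q r a₁ a₂ a₃ x₁ x₂ x₃ : ℝ}
    (h₁ : a₁ ^ 2 + x₁ ^ 2 = 1) (h₂ : a₂ ^ 2 + x₂ ^ 2 = 1) (h₃ : a₃ ^ 2 + x₃ ^ 2 = 1) :
    (1 - p ^ 2) * x₁ ^ 2 * x₂ ^ 2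
      + (1 - q ^ 2) * x₂ ^ 2 * x₃ ^ 2
      + (1 - r ^ 2) * x₃ ^ 2 * x₁ ^ 2
      - (2 + 2 * p * q * r) * x₁ ^ 2 * x₂ ^ 2 * x₃ ^ 2
      + 2 * (q + r * p) * a₂ * a₃ * x₂ * x₃ * x₁ ^ 2
      + 2 * (r + p * q) * a₃ * a₁ * x₃ * x₁ * x₂ ^ 2
      + 2 * (p + q * r) * a₁ * a₂ * x₁ * x₂ * x₃ ^ 2
      = gramAdjForm p q r (a₁ * x₂ * x₃) (a₂ * x₃ * x₁) (a₃ * x₁ * x₂)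
        + gramDet p q r * (x₁ * x₂ * x₃) ^ 2 := by
  unfold gramAdjForm gramDet
  linear_combination -(1 - q ^ 2) * x₂ ^ 2 * x₃ ^ 2 * h₁ - (1 - r ^ 2) * x₃ ^ 2 * x₁ ^ 2 * h₂
    - (1 - p ^ 2) * x₁ ^ 2 * x₂ ^ 2 * h₃

end ThreeCircle

open ThreeCircle in
theorem three_circle_key_inequality_general (θ₁₂ θ₂₃ θ₃₁ r₁ r₂ r₃ : ℝ)
    (h₁₂ : θ₁₂ ∈ Set.Ioo 0 π) (h₂₃ : θ₂₃ ∈ Set.Ioo 0 π)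
    (hsum : θ₁₂ + θ₂₃ + θ₃₁ > π)
    (ha : θ₁₂ + θ₂₃ < θ₃₁ + π) (hb : θ₂₃ + θ₃₁ < θ₁₂ + π) (hc : θ₃₁ + θ₁₂ < θ₂₃ + π)
    (hr₁ : r₁ ∈ Set.Ioo 0 π) (hr₂ : r₂ ∈ Set.Ioo 0 π) (hr₃ : r₃ ∈ Set.Ioo 0 π) :
    sin θ₁₂ ^ 2 * sin r₁ ^ 2 * sin r₂ ^ 2
      + sin θ₂₃ ^ 2 * sin r₂ ^ 2 * sin r₃ ^ 2
      + sin θ₃₁ ^ 2 * sin r₃ ^ 2 * sin r₁ ^ 2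
      - (2 + 2 * cos θ₁₂ * cos θ₂₃ * cos θ₃₁) * sin r₁ ^ 2 * sin r₂ ^ 2 * sin r₃ ^ 2
      + 2 * (cos θ₂₃ + cos θ₃₁ * cos θ₁₂) * cos r₂ * cos r₃ * sin r₂ * sin r₃ * sin r₁ ^ 2
      + 2 * (cos θ₃₁ + cos θ₁₂ * cos θ₂₃) * cos r₃ * cos r₁ * sin r₃ * sin r₁ * sin r₂ ^ 2
      + 2 * (cos θ₁₂ + cos θ₂₃ * cos θ₃₁) * cos r₁ * cos r₂ * sin r₁ * sin r₂ * sin r₃ ^ 2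
      > 0 := by
  rw [sin_sq θ₁₂, sin_sq θ₂₃, sin_sq θ₃₁, eq_gramAdjForm_add_gramDet_mul_sq (cos_sq_add_sin_sq r₁)
    (cos_sq_add_sin_sq r₂) (cos_sq_add_sin_sq r₃)]
  have hD : 0 < gramDet (cos θ₁₂) (cos θ₂₃) (cos θ₃₁) :=
    gramDet_cos_pos h₁₂.1 h₂₃.1 hsum ha hb hc
  have hq : cos θ₂₃ ^ 2 < 1 := by
    rw [cos_sq']
    linarith [pow_pos (sin_pos_of_pos_of_lt_pi h₂₃.1 h₂₃.2) 2]
  have hw : 0 < sin r₁ * sin r₂ * sin r₃ := by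
    have := sin_pos_of_pos_of_lt_pi hr₁.1 hr₁.2
    have := sin_pos_of_pos_of_lt_pi hr₂.1 hr₂.2
    have := sin_pos_of_pos_of_lt_pi hr₃.1 hr₃.2
    positivity
  exact add_pos_of_nonneg_of_pos (gramAdjForm_nonneg hq hD.le _ _ _) (mul_pos hD (pow_pos hw 2))

/-- The key strict inequality (formula (7.4) of the paper) establishing the triangle
inequalities for the distances between centers of a three-circle configuration with
radii `r₁, r₂, r₃` and overlap angles `θ₁₂, θ₂₃, θ₃₁` satisfying condition (c2). -/
theorem three_circle_key_inequality (θ₁₂ θ₂₃ θ₃₁ r₁ r₂ r₃ : ℝ)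
    (h₁₂ : θ₁₂ ∈ Set.Ioo 0 π) (h₂₃ : θ₂₃ ∈ Set.Ioo 0 π) (h₃₁ : θ₃₁ ∈ Set.Ioo 0 π)
    (hsum : θ₁₂ + θ₂₃ + θ₃₁ > π)
    (ha : θ₁₂ + θ₂₃ < θ₃₁ + π) (hb : θ₂₃ + θ₃₁ < θ₁₂ + π) (hc : θ₃₁ + θ₁₂ < θ₂₃ + π)
    (hr₁ : r₁ ∈ Set.Ioo 0 π) (hr₂ : r₂ ∈ Set.Ioo 0 π) (hr₃ : r₃ ∈ Set.Ioo 0 π) :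
    sin θ₁₂ ^ 2 * sin r₁ ^ 2 * sin r₂ ^ 2
      + sin θ₂₃ ^ 2 * sin r₂ ^ 2 * sin r₃ ^ 2
      + sin θ₃₁ ^ 2 * sin r₃ ^ 2 * sin r₁ ^ 2
      - (2 + 2 * cos θ₁₂ * cos θ₂₃ * cos θ₃₁) * sin r₁ ^ 2 * sin r₂ ^ 2 * sin r₃ ^ 2
      + 2 * (cos θ₂₃ + cos θ₃₁ * cos θ₁₂) * cos r₂ * cos r₃ * sin r₂ * sin r₃ * sin r₁ ^ 2
      + 2 * (cos θ₃₁ + cos θ₁₂ * cos θ₂₃) * cos r₃ * cos r₁ * sin r₃ * sin r₁ * sin r₂ ^ 2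
      + 2 * (cos θ₁₂ + cos θ₂₃ * cos θ₃₁) * cos r₁ * cos r₂ * sin r₁ * sin r₂ * sin r₃ ^ 2
      > 0 :=
  three_circle_key_inequality_general θ₁₂ θ₂₃ θ₃₁ r₁ r₂ r₃ h₁₂ h₂₃ hsum ha hb hc hr₁ hr₂ hr₃
end

section
/- Let θ₁₂, θ₂₃, θ₃₁ ∈ (0,π) satisfy θ₁₂+θ₂₃+θ₃₁ > π, θ₁₂+θ₂₃ < θ₃₁+π, θ₂₃+θ₃₁ < θ₁₂+π, and θ₃₁+θ₁₂ < θ₂₃+π, and let r₁, r₂, r₃ ∈ (0,π). For each pair (μ,ν) ∈ {(1,2),(2,3),(3,1)} define l_μν = arccos(cos r_μ cos r_ν − cos θ_μν · sin r_μ sin r_ν). Then each l_μν ∈ (0,π), the strict triangle inequalities l₁₂+l₂₃ > l₃₁, l₂₃+l₃₁ > l₁₂, l₃₁+l₁₂ > l₂₃ hold, and l₁₂+l₂₃+l₃₁ < 2π. -/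
/-!
Put `g_μν = cos l_μν`. The matrix `G = [[1, g₁₂, g₃₁], [g₁₂, 1, g₂₃], [g₃₁, g₂₃, 1]]` splits as
`c cᵀ + S M S` with `c = (cos r_μ)`, `S = diag (sin r_μ)` and `M` the matrix of the same shape
with off-diagonal entries `-cos θ_μν`. Condition (c2) makes both factors of
`det M = (cos (θ₁₂ - θ₂₃) + cos θ₃₁) (-cos (θ₁₂ + θ₂₃) - cos θ₃₁)` positive, so `M`, and with it
`G`, is positive definite. Finally `det G = (1 - u²)(1 - v²) - (uv - w)² > 0` for any ordering
`(u, v, w)` of the `g_μν` says `cos (arccos u + arccos v) < w`, which is the strict triangle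
inequality together with the perimeter bound.
-/

open Real Matrix

lemma cos_lt_cos_iff_abs_lt {s t : ℝ} (hs : s ∈ Set.Icc 0 π) (ht : |t| ≤ π) :
    cos s < cos t ↔ |t| < s := by
  rw [← cos_abs t]
  exact strictAntiOn_cos.lt_iff_gt hs ⟨abs_nonneg t, ht⟩

lemma cos_mem_Ioo_of_mem_Ioo {θ : ℝ} (hθ : θ ∈ Set.Ioo 0 π) : cos θ ∈ Set.Ioo (-1) 1 := by
  refine ⟨?_, ?_⟩
  · simpa using cos_lt_cos_of_nonneg_of_le_pi hθ.1.le le_rfl hθ.2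
  · simpa using cos_lt_cos_of_nonneg_of_le_pi le_rfl hθ.2.le hθ.1

lemma arccos_mem_Ioo {t : ℝ} (ht : t ∈ Set.Ioo (-1) 1) : arccos t ∈ Set.Ioo 0 π :=
  ⟨arccos_pos.2 ht.2, arccos_lt_pi.2 ht.1⟩

lemma cos_law_mem_Ioo {r₁ r₂ a : ℝ} (h₁ : r₁ ∈ Set.Ioo 0 π) (h₂ : r₂ ∈ Set.Ioo 0 π)
    (ha : a ∈ Set.Ioo (-1) 1) : cos r₁ * cos r₂ - a * sin r₁ * sin r₂ ∈ Set.Ioo (-1) 1 := by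
  have hs : 0 < sin r₁ * sin r₂ :=
    mul_pos (sin_pos_of_pos_of_lt_pi h₁.1 h₁.2) (sin_pos_of_pos_of_lt_pi h₂.1 h₂.2)
  constructor
  · nlinarith [neg_one_le_cos (r₁ + r₂), cos_add r₁ r₂, ha.2]
  · nlinarith [cos_le_one (r₁ - r₂), cos_sub r₁ r₂, ha.1]

def unitGram (x y z : ℝ) : Matrix (Fin 3) (Fin 3) ℝ := !![1, x, z; x, 1, y; z, y, 1]

def gramDet (x y z : ℝ) : ℝ := 1 - x ^ 2 - y ^ 2 - z ^ 2 + 2 * x * y * z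

lemma det_unitGram (x y z : ℝ) : (unitGram x y z).det = gramDet x y z := by
  simp [unitGram, gramDet, det_fin_three]
  ring

lemma gramDet_rotate (x y z : ℝ) : gramDet y z x = gramDet x y z := by
  unfold gramDet
  ring

lemma gramDet_eq (x y z : ℝ) :
    gramDet x y z = (1 - x ^ 2) * (1 - y ^ 2) - (x * y - z) ^ 2 := by
  unfold gramDet
  ring

-- An `L D Lᵀ` factorisation of `unitGram x y z`.
lemma one_sub_sq_mul_dotProduct_unitGram_mulVec (x y z : ℝ) (v : Fin 3 → ℝ) :
    (1 - x ^ 2) * (star v ⬝ᵥ (unitGram x y z *ᵥ v)) =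
      (1 - x ^ 2) * (v 0 + x * v 1 + z * v 2) ^ 2 + ((1 - x ^ 2) * v 1 + (y - x * z) * v 2) ^ 2
        + gramDet x y z * v 2 ^ 2 := by
  simp [unitGram, gramDet, dotProduct, mulVec, Fin.sum_univ_three]
  ring

lemma posDef_unitGram {x y z : ℝ} (hx : |x| < 1) (hD : 0 < gramDet x y z) :
    (unitGram x y z).PosDef := by
  refine .of_dotProduct_mulVec_pos ?_ fun v hv => ?_
  · ext i j
    fin_cases i <;> fin_cases j <;> rfl
  · have hx' : 0 < 1 - x ^ 2 := sub_pos.2 ((sq_lt_one_iff_abs_lt_one x).2 hx)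
    refine pos_of_mul_pos_right (a := 1 - x ^ 2) ?_ hx'.le
    rw [one_sub_sq_mul_dotProduct_unitGram_mulVec]
    have hsq₀ := mul_nonneg hx'.le (sq_nonneg (v 0 + x * v 1 + z * v 2))
    have hsq₁ := sq_nonneg ((1 - x ^ 2) * v 1 + (y - x * z) * v 2)
    have hsq₂ := mul_nonneg hD.le (sq_nonneg (v 2))
    by_cases h2 : v 2 = 0
    · by_cases h1 : v 1 = 0
      · have h0 : v 0 ≠ 0 := fun h0 => hv (by ext i; fin_cases i <;> simp [h0, h1, h2])
        have : 0 < (1 - x ^ 2) * v 0 ^ 2 := by positivity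
        simp only [h1, h2] at hsq₀ hsq₁ hsq₂ ⊢
        linarith
      · have : 0 < ((1 - x ^ 2) * v 1) ^ 2 := by positivity
        simp only [h2] at hsq₀ hsq₁ hsq₂ ⊢
        linarith
    · have : 0 < gramDet x y z * v 2 ^ 2 := by positivity
      linarith

lemma gramDet_neg_cos_eq (A B C : ℝ) :
    gramDet (-cos A) (-cos B) (-cos C) = (cos (A - B) + cos C) * (-cos (A + B) - cos C) := by
  rw [cos_sub, cos_add, gramDet]
  linear_combination -sin A ^ 2 * sin_sq_add_cos_sq B - (1 - cos B ^ 2) * sin_sq_add_cos_sq A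

lemma gramDet_neg_cos_pos {A B C : ℝ} (hC : C ∈ Set.Icc 0 π) (hsum : π < A + B + C)
    (hAB : A + B < C + π) (hBC : B + C < A + π) (hCA : C + A < B + π) :
    0 < gramDet (-cos A) (-cos B) (-cos C) := by
  have hdiff : |A - B| < π - C := abs_lt.2 ⟨by linarith, by linarith⟩
  have hsum' : |A + B - π| < C := abs_lt.2 ⟨by linarith, by linarith⟩
  have h₁ : cos (π - C) < cos (A - B) :=
    (cos_lt_cos_iff_abs_lt ⟨by linarith [hC.2], by linarith [hC.1]⟩ (by linarith [hC.1])).2 hdiff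
  have h₂ : cos C < cos (A + B - π) :=
    (cos_lt_cos_iff_abs_lt hC (by linarith [hC.2])).2 hsum'
  rw [cos_pi_sub] at h₁
  rw [cos_sub_pi] at h₂
  rw [gramDet_neg_cos_eq]
  exact mul_pos (by linarith) (by linarith)

lemma unitGram_cos_law_eq (r₁ r₂ r₃ a b c : ℝ) :
    unitGram (cos r₁ * cos r₂ - a * sin r₁ * sin r₂) (cos r₂ * cos r₃ - b * sin r₂ * sin r₃)
        (cos r₃ * cos r₁ - c * sin r₃ * sin r₁) =
      vecMulVec ![cos r₁, cos r₂, cos r₃] ![cos r₁, cos r₂, cos r₃] +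
        diagonal ![sin r₁, sin r₂, sin r₃] * unitGram (-a) (-b) (-c) *
          diagonal ![sin r₁, sin r₂, sin r₃] := by
  ext i j
  fin_cases i <;> fin_cases j <;>
    simp [unitGram, vecMulVec, diagonal, Matrix.mul_apply] <;>
    ring_nf <;>
    exact (cos_sq_add_sin_sq _).symm

lemma posDef_unitGram_cos_law {r₁ r₂ r₃ a b c : ℝ} (h₁ : sin r₁ ≠ 0) (h₂ : sin r₂ ≠ 0)
    (h₃ : sin r₃ ≠ 0) (hM : (unitGram (-a) (-b) (-c)).PosDef) :
    (unitGram (cos r₁ * cos r₂ - a * sin r₁ * sin r₂) (cos r₂ * cos r₃ - b * sin r₂ * sin r₃)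
        (cos r₃ * cos r₁ - c * sin r₃ * sin r₁)).PosDef := by
  rw [unitGram_cos_law_eq]
  refine PosDef.posSemidef_add (posSemidef_vecMulVec_self_star _) ?_
  have hS : IsUnit (diagonal ![sin r₁, sin r₂, sin r₃]) := by
    rw [isUnit_diagonal, Pi.isUnit_iff]
    intro i
    fin_cases i <;> simpa
  have := (IsUnit.posDef_star_left_conjugate_iff hS).2 hM
  rwa [star_eq_conjTranspose, diagonal_conjTranspose, star_trivial] at this

lemma arccos_triangle_of_gramDet_pos {u v w : ℝ} (hu : u ∈ Set.Ioo (-1) 1)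
    (hv : v ∈ Set.Ioo (-1) 1) (hw : w ∈ Set.Ioo (-1) 1) (hD : 0 < gramDet u v w) :
    arccos w < arccos u + arccos v ∧ arccos u + arccos v + arccos w < 2 * π := by
  have hcos : cos (arccos u + arccos v) < w := by
    rw [gramDet_eq] at hD
    have hsqrt : |u * v - w| < √(1 - u ^ 2) * √(1 - v ^ 2) := by
      rw [← sqrt_mul (by nlinarith [hu.1, hu.2]), ← sqrt_sq_eq_abs]
      exact sqrt_lt_sqrt (sq_nonneg _) (by linarith)
    rw [cos_add, cos_arccos hu.1.le hu.2.le, cos_arccos hv.1.le hv.2.le, sin_arccos, sin_arccos]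
    linarith [le_abs_self (u * v - w)]
  obtain ⟨hx₀, hx₁⟩ := arccos_mem_Ioo hu
  obtain ⟨hy₀, hy₁⟩ := arccos_mem_Ioo hv
  obtain ⟨hz₀, hz₁⟩ := arccos_mem_Ioo hw
  have key : |arccos u + arccos v - π| < π - arccos w := by
    refine (cos_lt_cos_iff_abs_lt ⟨by linarith, by linarith⟩
      (abs_le.2 ⟨by linarith, by linarith⟩)).1 ?_
    rwa [cos_pi_sub, cos_sub_pi, cos_arccos hw.1.le hw.2.le, neg_lt_neg_iff]
  constructor <;> linarith [abs_lt.1 key]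

/-- Under condition (c2), the numbers `l_μν = arccos (cos r_μ cos r_ν − cos θ_μν sin r_μ sin r_ν)`
are the side lengths of a nondegenerate spherical triangle. -/
theorem spherical_side_lengths (θ₁₂ θ₂₃ θ₃₁ r₁ r₂ r₃ l₁₂ l₂₃ l₃₁ : ℝ)
    (h₁₂ : θ₁₂ ∈ Set.Ioo 0 π) (h₂₃ : θ₂₃ ∈ Set.Ioo 0 π) (h₃₁ : θ₃₁ ∈ Set.Ioo 0 π)
    (hsum : θ₁₂ + θ₂₃ + θ₃₁ > π)
    (ha : θ₁₂ + θ₂₃ < θ₃₁ + π) (hb : θ₂₃ + θ₃₁ < θ₁₂ + π) (hc : θ₃₁ + θ₁₂ < θ₂₃ + π)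
    (hr₁ : r₁ ∈ Set.Ioo 0 π) (hr₂ : r₂ ∈ Set.Ioo 0 π) (hr₃ : r₃ ∈ Set.Ioo 0 π)
    (hl₁₂ : l₁₂ = arccos (cos r₁ * cos r₂ - cos θ₁₂ * sin r₁ * sin r₂))
    (hl₂₃ : l₂₃ = arccos (cos r₂ * cos r₃ - cos θ₂₃ * sin r₂ * sin r₃))
    (hl₃₁ : l₃₁ = arccos (cos r₃ * cos r₁ - cos θ₃₁ * sin r₃ * sin r₁)) :
    l₁₂ ∈ Set.Ioo 0 π ∧ l₂₃ ∈ Set.Ioo 0 π ∧ l₃₁ ∈ Set.Ioo 0 π ∧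
    l₁₂ + l₂₃ > l₃₁ ∧ l₂₃ + l₃₁ > l₁₂ ∧ l₃₁ + l₁₂ > l₂₃ ∧
    l₁₂ + l₂₃ + l₃₁ < 2 * π := by
  have hcos₁₂ := cos_mem_Ioo_of_mem_Ioo h₁₂
  have hg₁₂ := cos_law_mem_Ioo hr₁ hr₂ hcos₁₂
  have hg₂₃ := cos_law_mem_Ioo hr₂ hr₃ (cos_mem_Ioo_of_mem_Ioo h₂₃)
  have hg₃₁ := cos_law_mem_Ioo hr₃ hr₁ (cos_mem_Ioo_of_mem_Ioo h₃₁)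
  have hM : (unitGram (-cos θ₁₂) (-cos θ₂₃) (-cos θ₃₁)).PosDef :=
    posDef_unitGram (by rw [abs_neg]; exact abs_lt.2 hcos₁₂)
      (gramDet_neg_cos_pos ⟨h₃₁.1.le, h₃₁.2.le⟩ hsum ha hb hc)
  have hG := posDef_unitGram_cos_law (sin_pos_of_pos_of_lt_pi hr₁.1 hr₁.2).ne'
    (sin_pos_of_pos_of_lt_pi hr₂.1 hr₂.2).ne' (sin_pos_of_pos_of_lt_pi hr₃.1 hr₃.2).ne' hM
  have hD := det_unitGram _ _ _ ▸ hG.det_pos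
  obtain ⟨h₃₁_lt, hperimeter⟩ := arccos_triangle_of_gramDet_pos hg₁₂ hg₂₃ hg₃₁ hD
  obtain ⟨h₁₂_lt, -⟩ := arccos_triangle_of_gramDet_pos hg₂₃ hg₃₁ hg₁₂ (by rwa [gramDet_rotate])
  obtain ⟨h₂₃_lt, -⟩ :=
    arccos_triangle_of_gramDet_pos hg₃₁ hg₁₂ hg₂₃ (by rwa [gramDet_rotate, gramDet_rotate])
  subst hl₁₂ hl₂₃ hl₃₁
  exact ⟨arccos_mem_Ioo hg₁₂, arccos_mem_Ioo hg₂₃, arccos_mem_Ioo hg₃₁,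
    h₃₁_lt, h₁₂_lt, h₂₃_lt, hperimeter⟩
end

section
/- Let θ₁₂, θ₂₃, θ₃₁ ∈ (0,π) satisfy θ₁₂+θ₂₃+θ₃₁ > π, θ₁₂+θ₂₃ < θ₃₁+π, θ₂₃+θ₃₁ < θ₁₂+π, and θ₃₁+θ₁₂ < θ₂₃+π, let r₁, r₂, r₃ ∈ (0,π), and let z₁, z₂, z₃ be unit vectors in ℝ³ with ⟪z_μ, z_ν⟫ = cos r_μ cos r_ν − cos θ_μν · sin r_μ sin r_ν for every pair (μ,ν) ∈ {(1,2),(2,3),(3,1)}. Then there is no unit vector x ∈ ℝ³ with ⟪x, z_μ⟫ = cos r_μ simultaneously for μ = 1, 2, 3; that is, the three boundary circles of the caps D(z₁,r₁), D(z₂,r₂), D(z₃,r₃) have empty common intersection. -/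
/-!
If `x` lay on all three circles, the vectors `wᵢ = zᵢ - cos rᵢ • x` would be three vectors in the
plane orthogonal to `x`, so their Gram determinant would vanish. But `‖wᵢ‖ = sin rᵢ` and
`⟪wᵢ, wⱼ⟫ = -cos θᵢⱼ sin rᵢ sin rⱼ`, so this determinant is
`(sin r₁ sin r₂ sin r₃)² (1 - Σ cos² θᵢⱼ - 2 ∏ cos θᵢⱼ)`. The conditions on the `θᵢⱼ` say exactly
that the `π - θᵢⱼ` are the sides of a nondegenerate spherical triangle, and the second factor is the
Gram determinant of its vertices, hence positive.
-/

open Real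

open Module Submodule Matrix in
theorem det_gram_eq_zero_of_forall_inner_eq_zero {𝕜 E : Type*} [RCLike 𝕜]
    [NormedAddCommGroup E] [InnerProductSpace 𝕜 E] [FiniteDimensional 𝕜 E] {n : ℕ}
    (hE : finrank 𝕜 E ≤ n) {x : E} (hx : x ≠ 0) {w : Fin n → E}
    (hw : ∀ i, inner 𝕜 x (w i) = 0) :
    (gram 𝕜 w).det = 0 := by
  by_contra hdet
  have hx_span : x ∉ span 𝕜 (Set.range w) := by
    intro hmem
    have hspan : span 𝕜 (Set.range w) ≤ (𝕜 ∙ x)ᗮ := span_le.mpr <|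
      Set.range_subset_iff.mpr fun i ↦ mem_orthogonal_singleton_iff_inner_right.mpr (hw i)
    exact hx <| inner_self_eq_zero.mp <| mem_orthogonal_singleton_iff_inner_right.mp (hspan hmem)
  have hcard := ((linearIndependent_of_det_gram_ne_zero hdet).finCons hx_span).fintype_card_le_finrank
  rw [Fintype.card_fin] at hcard
  omega

theorem one_sub_sum_cos_sq_sub_two_mul_prod_cos_pos {α β γ : ℝ}
    (hα : α ∈ Set.Ioo 0 π) (hβ : β ∈ Set.Ioo 0 π) (hγ : γ ∈ Set.Ioo 0 π) (hsum : π < α + β + γ)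
    (hαβ : α + β < γ + π) (hβγ : β + γ < α + π) (hγα : γ + α < β + π) :
    0 < 1 - cos α ^ 2 - cos β ^ 2 - cos γ ^ 2 - 2 * cos α * cos β * cos γ := by
  obtain ⟨hα₀, hαπ⟩ := hα
  obtain ⟨hβ₀, hβπ⟩ := hβ
  obtain ⟨hγ₀, hγπ⟩ := hγ
  have hfactor : 1 - cos α ^ 2 - cos β ^ 2 - cos γ ^ 2 - 2 * cos α * cos β * cos γ
      = -((cos α + cos (β + γ)) * (cos α + cos (β - γ))) := by
    rw [cos_add, cos_sub]
    linear_combination -sin γ ^ 2 * sin_sq_add_cos_sq β - (1 - cos β ^ 2) * sin_sq_add_cos_sq γ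
  have hplus : cos α + cos (β + γ) < 0 := by
    rw [cos_add_cos]
    have h₁ : cos ((α + (β + γ)) / 2) < 0 :=
      cos_neg_of_pi_div_two_lt_of_lt (by linarith) (by linarith)
    have h₂ : 0 < cos ((α - (β + γ)) / 2) := cos_pos_of_mem_Ioo ⟨by linarith, by linarith⟩
    nlinarith
  have hminus : 0 < cos α + cos (β - γ) := by
    rw [cos_add_cos]
    have h₁ : 0 < cos ((α + (β - γ)) / 2) := cos_pos_of_mem_Ioo ⟨by linarith, by linarith⟩
    have h₂ : 0 < cos ((α - (β - γ)) / 2) := cos_pos_of_mem_Ioo ⟨by linarith, by linarith⟩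
    positivity
  rw [hfactor, neg_pos]
  exact mul_neg_of_neg_of_pos hplus hminus

section

variable {E : Type*} [NormedAddCommGroup E] [InnerProductSpace ℝ E] {x z z' : E} {c c' : ℝ}

theorem inner_sub_smul_eq_zero_of_inner_eq (hx : ‖x‖ = 1) (hz : inner ℝ x z = c) :
    inner ℝ x (z - c • x) = 0 := by
  rw [inner_sub_right, real_inner_smul_right, real_inner_self_eq_norm_sq, hx, hz]
  ring

theorem inner_sub_smul_sub_smul_of_inner_eq (hx : ‖x‖ = 1) (hz : inner ℝ x z = c)
    (hz' : inner ℝ x z' = c') : inner ℝ (z - c • x) (z' - c' • x) = inner ℝ z z' - c * c' := by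
  rw [inner_sub_left, real_inner_smul_left, inner_sub_smul_eq_zero_of_inner_eq hx hz',
    inner_sub_right, real_inner_smul_right, real_inner_comm x z, hz]
  ring

theorem inner_self_sub_cos_smul_eq_sin_sq {r : ℝ} (hx : ‖x‖ = 1) (hz : ‖z‖ = 1)
    (hxz : inner ℝ x z = cos r) : inner ℝ (z - cos r • x) (z - cos r • x) = sin r ^ 2 := by
  rw [inner_sub_smul_sub_smul_of_inner_eq hx hxz hxz, real_inner_self_eq_norm_sq, hz, sin_sq]
  ring

end

/-- Lemma 4.2: in a three-circle configuration satisfying condition (c2), the three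
boundary circles have no common point. -/
theorem boundary_circles_no_common_point (θ₁₂ θ₂₃ θ₃₁ r₁ r₂ r₃ : ℝ)
    (h₁₂ : θ₁₂ ∈ Set.Ioo 0 π) (h₂₃ : θ₂₃ ∈ Set.Ioo 0 π) (h₃₁ : θ₃₁ ∈ Set.Ioo 0 π)
    (hsum : θ₁₂ + θ₂₃ + θ₃₁ > π)
    (ha : θ₁₂ + θ₂₃ < θ₃₁ + π) (hb : θ₂₃ + θ₃₁ < θ₁₂ + π) (hc : θ₃₁ + θ₁₂ < θ₂₃ + π)
    (hr₁ : r₁ ∈ Set.Ioo 0 π) (hr₂ : r₂ ∈ Set.Ioo 0 π) (hr₃ : r₃ ∈ Set.Ioo 0 π)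
    (z₁ z₂ z₃ : EuclideanSpace ℝ (Fin 3))
    (hz₁ : ‖z₁‖ = 1) (hz₂ : ‖z₂‖ = 1) (hz₃ : ‖z₃‖ = 1)
    (hz₁₂ : (inner ℝ z₁ z₂ : ℝ) = cos r₁ * cos r₂ - cos θ₁₂ * sin r₁ * sin r₂)
    (hz₂₃ : (inner ℝ z₂ z₃ : ℝ) = cos r₂ * cos r₃ - cos θ₂₃ * sin r₂ * sin r₃)
    (hz₃₁ : (inner ℝ z₃ z₁ : ℝ) = cos r₃ * cos r₁ - cos θ₃₁ * sin r₃ * sin r₁) :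
    ¬ ∃ x : EuclideanSpace ℝ (Fin 3), ‖x‖ = 1 ∧
        (inner ℝ x z₁ : ℝ) = cos r₁ ∧ (inner ℝ x z₂ : ℝ) = cos r₂ ∧
        (inner ℝ x z₃ : ℝ) = cos r₃ := by
  rintro ⟨x, hx, hxz₁, hxz₂, hxz₃⟩
  set w : Fin 3 → EuclideanSpace ℝ (Fin 3) := ![z₁ - cos r₁ • x, z₂ - cos r₂ • x, z₃ - cos r₃ • x]
  have hw_orth : ∀ i, inner ℝ x (w i) = 0 := by
    intro i
    fin_cases i
    exacts [inner_sub_smul_eq_zero_of_inner_eq hx hxz₁, inner_sub_smul_eq_zero_of_inner_eq hx hxz₂,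
      inner_sub_smul_eq_zero_of_inner_eq hx hxz₃]
  have hdet_zero : (Matrix.gram ℝ w).det = 0 := det_gram_eq_zero_of_forall_inner_eq_zero
    (by rw [finrank_euclideanSpace_fin]) (norm_ne_zero_iff.mp (by rw [hx]; exact one_ne_zero)) hw_orth
  have hdet : (Matrix.gram ℝ w).det = (sin r₁ * sin r₂ * sin r₃) ^ 2 *
      (1 - cos θ₁₂ ^ 2 - cos θ₂₃ ^ 2 - cos θ₃₁ ^ 2 - 2 * cos θ₁₂ * cos θ₂₃ * cos θ₃₁) := by
    rw [Matrix.det_fin_three]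
    simp only [Matrix.gram_apply, Matrix.cons_val_zero, Matrix.cons_val_one, Matrix.cons_val, w,
      inner_self_sub_cos_smul_eq_sin_sq hx hz₁ hxz₁, inner_self_sub_cos_smul_eq_sin_sq hx hz₂ hxz₂,
      inner_self_sub_cos_smul_eq_sin_sq hx hz₃ hxz₃, inner_sub_smul_sub_smul_of_inner_eq hx,
      hxz₁, hxz₂, hxz₃]
    rw [real_inner_comm z₁ z₂, real_inner_comm z₂ z₃, real_inner_comm z₃ z₁, hz₁₂, hz₂₃, hz₃₁]
    ring
  have hsin : 0 < sin r₁ * sin r₂ * sin r₃ :=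
    mul_pos (mul_pos (sin_pos_of_mem_Ioo hr₁) (sin_pos_of_mem_Ioo hr₂)) (sin_pos_of_mem_Ioo hr₃)
  have hΔ := one_sub_sum_cos_sq_sub_two_mul_prod_cos_pos h₁₂ h₂₃ h₃₁ hsum ha hb hc
  rw [hdet] at hdet_zero
  exact (mul_pos (pow_pos hsin 2) hΔ).ne' hdet_zero
end

section
/- Let D₁ = D(c₁,r₁), D₂ = D(c₂,r₂), D₃ = D(c₃,r₃) be three pairwise intersecting spherical caps on the unit sphere S² with radii r₁, r₂, r₃ ∈ (0, π/2], and suppose there exist overlap angles θ₁₂, θ₂₃, θ₃₁ ∈ [0,π), i.e. cos θ_μν = (cos r_μ cos r_ν − ⟪c_μ,c_ν⟫)/(sin r_μ sin r_ν) for each pair. If θ₁₂ + θ₂₃ + θ₃₁ < π, then D₁ ∩ D₂ ∩ D₃ = ∅. -/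
/-!
Suppose `x` lies in all three caps. For a cap `D(c, r)` containing `x` put
`σ = √(⟪x, c⟫² - cos² r)` and `w = ((σ - ⟪x, c⟫) • x + c) / sin r`, a unit vector. For two caps
containing `x`, Aczél's inequality `σ σ' ≤ ⟪x, c⟫ ⟪x, c'⟫ - cos r cos r'` (valid because
`0 ≤ cos r ≤ ⟪x, c⟫` when `r ≤ π / 2`) gives `⟪w, w'⟫ ≤ -cos Θ`, that is
`∠(w, w') ≥ π - Θ`. Since the three angles between `w₁, w₂, w₃` sum to at most `2π`, the overlap
angles sum to at least `π`.
-/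

open Real InnerProductGeometry
open scoped RealInnerProductSpace

section

variable {V : Type*} [NormedAddCommGroup V] [InnerProductSpace ℝ V]

theorem angle_add_angle_add_angle_le_two_pi (u v w : V) :
    angle u v + angle v w + angle w u ≤ 2 * π := by
  have h := angle_le_angle_add_angle w (-v) u
  rw [angle_neg_right, angle_neg_left, angle_comm w v, angle_comm v u] at h
  linarith

theorem angle_le_of_cos_le_inner {u v : V} (hu : ‖u‖ = 1) (hv : ‖v‖ = 1) {θ : ℝ}
    (hθ : θ ∈ Set.Icc 0 π) (h : cos θ ≤ ⟪u, v⟫) : angle u v ≤ θ := by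
  rw [← cos_angle_mul_norm_mul_norm, hu, hv, mul_one, mul_one] at h
  exact (strictAntiOn_cos.le_iff_ge hθ ⟨angle_nonneg u v, angle_le_pi u v⟩).1 h

theorem sqrt_sq_sub_sq_mul_sqrt_sq_sub_sq_le {a b a' b' : ℝ} (hb : 0 ≤ b) (hab : b ≤ a)
    (hb' : 0 ≤ b') (hab' : b' ≤ a') :
    √(a ^ 2 - b ^ 2) * √(a' ^ 2 - b' ^ 2) ≤ a * a' - b * b' := by
  rw [← sqrt_mul (by nlinarith)]
  apply sqrt_le_iff.2 ⟨by nlinarith, ?_⟩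
  nlinarith [sq_nonneg (a * b' - a' * b)]

noncomputable def capVector (x c : V) (r : ℝ) : V :=
  (sin r)⁻¹ • ((√(⟪x, c⟫ ^ 2 - cos r ^ 2) - ⟪x, c⟫) • x + c)

theorem inner_capVector {x : V} (hx : ‖x‖ = 1) (c c' : V) (r r' : ℝ) :
    ⟪capVector x c r, capVector x c' r'⟫ =
      (√(⟪x, c⟫ ^ 2 - cos r ^ 2) * √(⟪x, c'⟫ ^ 2 - cos r' ^ 2) - ⟪x, c⟫ * ⟪x, c'⟫ + ⟪c, c'⟫)
        / (sin r * sin r') := by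
  have hxx : ⟪x, x⟫ = 1 := by rw [real_inner_self_eq_norm_sq, hx, one_pow]
  simp only [capVector, real_inner_smul_left, real_inner_smul_right, inner_add_left,
    inner_add_right, hxx, real_inner_comm x]
  field_simp
  ring

variable {x c c' : V} {r r' : ℝ}

theorem norm_capVector (hx : ‖x‖ = 1) (hc : ‖c‖ = 1) (hsin : 0 < sin r) (hcos : 0 ≤ cos r)
    (hxc : cos r ≤ ⟪x, c⟫) : ‖capVector x c r‖ = 1 := by
  have hσ : √(⟪x, c⟫ ^ 2 - cos r ^ 2) ^ 2 = ⟪x, c⟫ ^ 2 - cos r ^ 2 := sq_sqrt (by nlinarith)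
  have h := inner_capVector hx c c r r
  rw [real_inner_self_eq_norm_sq, real_inner_self_eq_norm_sq, hc] at h
  rw [← sq_eq_sq₀ (norm_nonneg _) zero_le_one, one_pow, h, div_eq_one_iff_eq (by positivity)]
  nlinarith [sin_sq_add_cos_sq r]

theorem angle_capVector_neg_capVector_le (hx : ‖x‖ = 1) (hc : ‖c‖ = 1) (hc' : ‖c'‖ = 1)
    (hsin : 0 < sin r) (hcos : 0 ≤ cos r) (hsin' : 0 < sin r') (hcos' : 0 ≤ cos r')
    (hxc : cos r ≤ ⟪x, c⟫) (hxc' : cos r' ≤ ⟪x, c'⟫) {θ : ℝ} (hθ : θ ∈ Set.Icc 0 π)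
    (hcosθ : cos θ = (cos r * cos r' - ⟪c, c'⟫) / (sin r * sin r')) :
    angle (capVector x c r) (-capVector x c' r') ≤ θ := by
  refine angle_le_of_cos_le_inner (norm_capVector hx hc hsin hcos hxc)
    (by rw [norm_neg, norm_capVector hx hc' hsin' hcos' hxc']) hθ ?_
  rw [inner_neg_right, inner_capVector hx, hcosθ, ← neg_div,
    div_le_div_iff_of_pos_right (by positivity)]
  linarith [sqrt_sq_sub_sq_mul_sqrt_sq_sub_sq_le hcos hxc hcos' hxc']

end

theorem sin_pos_and_cos_nonneg_of_mem_Ioc {r : ℝ} (hr : r ∈ Set.Ioc 0 (π / 2)) :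
    0 < sin r ∧ 0 ≤ cos r :=
  ⟨sin_pos_of_pos_of_lt_pi hr.1 (by linarith [hr.2, pi_pos]),
    cos_nonneg_of_mem_Icc ⟨by linarith [hr.1, pi_pos], hr.2⟩⟩

theorem caps_empty_triple_intersection_general (c₁ c₂ c₃ : EuclideanSpace ℝ (Fin 3))
    (hc₁ : ‖c₁‖ = 1) (hc₂ : ‖c₂‖ = 1) (hc₃ : ‖c₃‖ = 1)
    (r₁ r₂ r₃ : ℝ)
    (hr₁ : r₁ ∈ Set.Ioc 0 (π / 2)) (hr₂ : r₂ ∈ Set.Ioc 0 (π / 2))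
    (hr₃ : r₃ ∈ Set.Ioc 0 (π / 2))
    (D₁ D₂ D₃ : Set (EuclideanSpace ℝ (Fin 3)))
    (hD₁ : D₁ = {x | ‖x‖ = 1 ∧ cos r₁ ≤ (inner ℝ x c₁ : ℝ)})
    (hD₂ : D₂ = {x | ‖x‖ = 1 ∧ cos r₂ ≤ (inner ℝ x c₂ : ℝ)})
    (hD₃ : D₃ = {x | ‖x‖ = 1 ∧ cos r₃ ≤ (inner ℝ x c₃ : ℝ)})
    (θ₁₂ θ₂₃ θ₃₁ : ℝ)
    (hθ₁₂ : θ₁₂ ∈ Set.Ico 0 π) (hθ₂₃ : θ₂₃ ∈ Set.Ico 0 π) (hθ₃₁ : θ₃₁ ∈ Set.Ico 0 π)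
    (hcos₁₂ : cos θ₁₂ = (cos r₁ * cos r₂ - (inner ℝ c₁ c₂ : ℝ)) / (sin r₁ * sin r₂))
    (hcos₂₃ : cos θ₂₃ = (cos r₂ * cos r₃ - (inner ℝ c₂ c₃ : ℝ)) / (sin r₂ * sin r₃))
    (hcos₃₁ : cos θ₃₁ = (cos r₃ * cos r₁ - (inner ℝ c₃ c₁ : ℝ)) / (sin r₃ * sin r₁))
    (hsum : θ₁₂ + θ₂₃ + θ₃₁ < π) :
    D₁ ∩ D₂ ∩ D₃ = ∅ := by
  subst hD₁ hD₂ hD₃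
  refine Set.eq_empty_iff_forall_notMem.2 ?_
  rintro x ⟨⟨⟨hx, hxc₁⟩, -, hxc₂⟩, -, hxc₃⟩
  obtain ⟨hsin₁, hcos₁⟩ := sin_pos_and_cos_nonneg_of_mem_Ioc hr₁
  obtain ⟨hsin₂, hcos₂⟩ := sin_pos_and_cos_nonneg_of_mem_Ioc hr₂
  obtain ⟨hsin₃, hcos₃⟩ := sin_pos_and_cos_nonneg_of_mem_Ioc hr₃
  have h₁₂ := angle_capVector_neg_capVector_le hx hc₁ hc₂ hsin₁ hcos₁ hsin₂ hcos₂ hxc₁ hxc₂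
    (Set.Ico_subset_Icc_self hθ₁₂) hcos₁₂
  have h₂₃ := angle_capVector_neg_capVector_le hx hc₂ hc₃ hsin₂ hcos₂ hsin₃ hcos₃ hxc₂ hxc₃
    (Set.Ico_subset_Icc_self hθ₂₃) hcos₂₃
  have h₃₁ := angle_capVector_neg_capVector_le hx hc₃ hc₁ hsin₃ hcos₃ hsin₁ hcos₁ hxc₃ hxc₁
    (Set.Ico_subset_Icc_self hθ₃₁) hcos₃₁
  rw [angle_neg_right] at h₁₂ h₂₃ h₃₁
  linarith [angle_add_angle_add_angle_le_two_pi (capVector x c₁ r₁) (capVector x c₂ r₂)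
    (capVector x c₃ r₃)]

/-- Lemma 4.3: three pairwise intersecting spherical caps of radii at most `π/2` whose
overlap angles have sum less than `π` have empty common intersection. -/
theorem caps_empty_triple_intersection (c₁ c₂ c₃ : EuclideanSpace ℝ (Fin 3))
    (hc₁ : ‖c₁‖ = 1) (hc₂ : ‖c₂‖ = 1) (hc₃ : ‖c₃‖ = 1)
    (r₁ r₂ r₃ : ℝ)
    (hr₁ : r₁ ∈ Set.Ioc 0 (π / 2)) (hr₂ : r₂ ∈ Set.Ioc 0 (π / 2))
    (hr₃ : r₃ ∈ Set.Ioc 0 (π / 2))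
    (D₁ D₂ D₃ : Set (EuclideanSpace ℝ (Fin 3)))
    (hD₁ : D₁ = {x | ‖x‖ = 1 ∧ cos r₁ ≤ (inner ℝ x c₁ : ℝ)})
    (hD₂ : D₂ = {x | ‖x‖ = 1 ∧ cos r₂ ≤ (inner ℝ x c₂ : ℝ)})
    (hD₃ : D₃ = {x | ‖x‖ = 1 ∧ cos r₃ ≤ (inner ℝ x c₃ : ℝ)})
    (h₁₂ : (D₁ ∩ D₂).Nonempty) (h₂₃ : (D₂ ∩ D₃).Nonempty) (h₃₁ : (D₃ ∩ D₁).Nonempty)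
    (θ₁₂ θ₂₃ θ₃₁ : ℝ)
    (hθ₁₂ : θ₁₂ ∈ Set.Ico 0 π) (hθ₂₃ : θ₂₃ ∈ Set.Ico 0 π) (hθ₃₁ : θ₃₁ ∈ Set.Ico 0 π)
    (hcos₁₂ : cos θ₁₂ = (cos r₁ * cos r₂ - (inner ℝ c₁ c₂ : ℝ)) / (sin r₁ * sin r₂))
    (hcos₂₃ : cos θ₂₃ = (cos r₂ * cos r₃ - (inner ℝ c₂ c₃ : ℝ)) / (sin r₂ * sin r₃))
    (hcos₃₁ : cos θ₃₁ = (cos r₃ * cos r₁ - (inner ℝ c₃ c₁ : ℝ)) / (sin r₃ * sin r₁))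
    (hsum : θ₁₂ + θ₂₃ + θ₃₁ < π) :
    D₁ ∩ D₂ ∩ D₃ = ∅ :=
  caps_empty_triple_intersection_general c₁ c₂ c₃ hc₁ hc₂ hc₃ r₁ r₂ r₃ hr₁ hr₂ hr₃ D₁ D₂ D₃ hD₁ hD₂
    hD₃ θ₁₂ θ₂₃ θ₃₁ hθ₁₂ hθ₂₃ hθ₃₁ hcos₁₂ hcos₂₃ hcos₃₁ hsum
end

section
/- Let D₁, D₂, D₃ be closed disks in the Euclidean plane with centers z₁, z₂, z₃ and radii r₁, r₂, r₃ > 0, such that D₂ ∩ D₃ and D₃ ∩ D₁ are nonempty with overlap angles θ₂₃, θ₃₁ ∈ [0,π) (i.e. cos θ_μν = (‖z_μ − z_ν‖² − r_μ² − r_ν²)/(2 r_μ r_ν)), and such that D₁ ∩ D₂ consists of a single point p with p ∈ D₃. Then θ₂₃ + θ₃₁ ≥ π, and equality holds if and only if p lies on the boundary circle of D₃ (i.e. ‖p − z₃‖ = r₃). -/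
open Real Metric EuclideanGeometry

/-!
Two closed disks meeting in a single point `p` are externally tangent, so `p` splits the segment
`z₁z₂` into pieces of lengths `r₁` and `r₂`. Stewart's theorem for the cevian `z₃p` then gives
`cos θ₂₃ + cos θ₃₁ = (r₁ + r₂) (‖p - z₃‖² - r₃²) / (2 r₁ r₂ r₃)`, which is `≤ 0` because
`p ∈ D₃`, with equality iff `p` is on the boundary circle. As `cos` is strictly decreasing on
`[0, π]`, `cos θ₂₃ + cos θ₃₁ ≤ 0` says `π - θ₃₁ ≤ θ₂₃`.
-/

theorem dist_eq_add_of_closedBall_inter_closedBall_eq_singleton {E : Type*}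
    [NormedAddCommGroup E] [NormedSpace ℝ E] [Nontrivial E]
    {z₁ z₂ p : E} {r₁ r₂ : ℝ} (hr₁ : 0 < r₁) (hr₂ : 0 < r₂)
    (h : closedBall z₁ r₁ ∩ closedBall z₂ r₂ = {p}) : dist z₁ z₂ = r₁ + r₂ := by
  have hp : p ∈ closedBall z₁ r₁ ∩ closedBall z₂ r₂ := h ▸ rfl
  refine le_antisymm ((dist_triangle_right z₁ z₂ p).trans
    (add_le_add (mem_closedBall'.1 hp.1) (mem_closedBall'.1 hp.2))) ?_
  by_contra! hlt
  -- otherwise the open balls meet in a nonempty open set, which would have to be `{p}`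
  obtain ⟨q, hq₁, hq₂⟩ := exists_dist_lt_lt hr₁ hr₂ (add_comm r₁ r₂ ▸ hlt)
  have hsub : ball z₁ r₁ ∩ ball z₂ r₂ ⊆ {p} :=
    h ▸ Set.inter_subset_inter ball_subset_closedBall ball_subset_closedBall
  have hq : q ∈ ball z₁ r₁ ∩ ball z₂ r₂ := ⟨mem_ball'.2 hq₁, mem_ball.2 hq₂⟩
  have hopen : IsOpen ({p} : Set E) := by
    rw [← (Set.subset_singleton_iff_eq.1 hsub).resolve_left (Set.nonempty_of_mem hq).ne_empty]
    exact isOpen_ball.inter isOpen_ball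
  exact not_isOpen_singleton p hopen

theorem dist_eq_of_mem_closedBall_of_add_le_dist {α : Type*} [PseudoMetricSpace α]
    {z₁ z₂ p : α} {r₁ r₂ : ℝ} (hp₁ : p ∈ closedBall z₁ r₁) (hp₂ : p ∈ closedBall z₂ r₂)
    (hd : r₁ + r₂ ≤ dist z₁ z₂) : dist p z₁ = r₁ ∧ dist p z₂ = r₂ := by
  rw [mem_closedBall] at hp₁ hp₂
  have := dist_triangle z₁ p z₂
  rw [dist_comm z₁ p] at this
  constructor <;> linarith

theorem dist_sq_mul_add_dist_sq_mul_of_dist_eq_add {V P : Type*} [NormedAddCommGroup V]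
    [InnerProductSpace ℝ V] [MetricSpace P] [NormedAddTorsor V P] {a b c p : P} {r₁ r₂ : ℝ}
    (hr₁ : 0 < r₁) (hr₂ : 0 < r₂) (hb : dist p b = r₁) (hc : dist p c = r₂)
    (hbc : dist b c = r₁ + r₂) :
    dist a b ^ 2 * r₂ + dist a c ^ 2 * r₁ = (r₁ + r₂) * (dist a p ^ 2 + r₁ * r₂) := by
  have hsbtw : Sbtw ℝ b p c :=
    ⟨dist_add_dist_eq_iff.1 (by rw [dist_comm, hb, hc, hbc]),
      fun h => hr₁.ne' (by rw [← hb, h, dist_self]),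
      fun h => hr₂.ne' (by rw [← hc, h, dist_self])⟩
  have := dist_sq_mul_dist_add_dist_sq_mul_dist a b c p (angle_eq_pi_iff_sbtw.2 hsbtw)
  rwa [dist_comm c p, dist_comm b p, hb, hc, hbc] at this

noncomputable def overlapCos {P : Type*} [MetricSpace P] (z₁ z₂ : P) (r₁ r₂ : ℝ) : ℝ :=
  (dist z₁ z₂ ^ 2 - r₁ ^ 2 - r₂ ^ 2) / (2 * r₁ * r₂)

theorem overlapCos_add_overlapCos_of_dist_eq_add {V P : Type*} [NormedAddCommGroup V]
    [InnerProductSpace ℝ V] [MetricSpace P] [NormedAddTorsor V P] {z₁ z₂ z₃ p : P}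
    {r₁ r₂ r₃ : ℝ} (hr₁ : 0 < r₁) (hr₂ : 0 < r₂) (hr₃ : 0 < r₃) (hp₁ : dist p z₁ = r₁)
    (hp₂ : dist p z₂ = r₂) (hd : dist z₁ z₂ = r₁ + r₂) :
    overlapCos z₂ z₃ r₂ r₃ + overlapCos z₃ z₁ r₃ r₁ =
      (r₁ + r₂) / (2 * r₁ * r₂ * r₃) * (dist p z₃ ^ 2 - r₃ ^ 2) := by
  have hstewart := dist_sq_mul_add_dist_sq_mul_of_dist_eq_add (a := z₃) hr₁ hr₂ hp₁ hp₂ hd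
  rw [dist_comm z₃ z₂, dist_comm z₃ p] at hstewart
  unfold overlapCos
  field_simp
  linear_combination hstewart

theorem pi_le_add_iff_cos_add_nonpos {θ φ : ℝ} (hθ : θ ∈ Set.Icc 0 π) (hφ : φ ∈ Set.Icc 0 π) :
    π ≤ θ + φ ↔ cos θ + cos φ ≤ 0 := by
  have hφ' : π - φ ∈ Set.Icc 0 π := ⟨by linarith [hφ.2], by linarith [hφ.1]⟩
  rw [← sub_le_iff_le_add, ← strictAntiOn_cos.le_iff_ge hθ hφ', cos_pi_sub,
    le_neg_iff_add_nonpos_right]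

theorem add_eq_pi_iff_cos_add_eq_zero {θ φ : ℝ} (hθ : θ ∈ Set.Icc 0 π) (hφ : φ ∈ Set.Icc 0 π) :
    θ + φ = π ↔ cos θ + cos φ = 0 := by
  have hφ' : π - φ ∈ Set.Icc 0 π := ⟨by linarith [hφ.2], by linarith [hφ.1]⟩
  rw [← eq_sub_iff_add_eq, ← injOn_cos.eq_iff hθ hφ', cos_pi_sub, add_eq_zero_iff_eq_neg]

theorem overlap_angle_relation_tangent_general (z₁ z₂ z₃ : EuclideanSpace ℝ (Fin 2))
    (r₁ r₂ r₃ : ℝ) (hr₁ : 0 < r₁) (hr₂ : 0 < r₂) (hr₃ : 0 < r₃)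
    (θ₂₃ θ₃₁ : ℝ)
    (hθ₂₃ : θ₂₃ ∈ Set.Ico 0 π) (hθ₃₁ : θ₃₁ ∈ Set.Ico 0 π)
    (hcos₂₃ : cos θ₂₃ = (dist z₂ z₃ ^ 2 - r₂ ^ 2 - r₃ ^ 2) / (2 * r₂ * r₃))
    (hcos₃₁ : cos θ₃₁ = (dist z₃ z₁ ^ 2 - r₃ ^ 2 - r₁ ^ 2) / (2 * r₃ * r₁))
    (p : EuclideanSpace ℝ (Fin 2))
    (hp : closedBall z₁ r₁ ∩ closedBall z₂ r₂ = {p})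
    (hpD₃ : p ∈ closedBall z₃ r₃) :
    θ₂₃ + θ₃₁ ≥ π ∧ (θ₂₃ + θ₃₁ = π ↔ dist p z₃ = r₃) := by
  have hd := dist_eq_add_of_closedBall_inter_closedBall_eq_singleton hr₁ hr₂ hp
  have hpmem : p ∈ closedBall z₁ r₁ ∩ closedBall z₂ r₂ := hp ▸ rfl
  obtain ⟨hp₁, hp₂⟩ := dist_eq_of_mem_closedBall_of_add_le_dist hpmem.1 hpmem.2 hd.ge
  have hsum : cos θ₂₃ + cos θ₃₁ = (r₁ + r₂) / (2 * r₁ * r₂ * r₃) * (dist p z₃ ^ 2 - r₃ ^ 2) :=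
    hcos₂₃ ▸ hcos₃₁ ▸ overlapCos_add_overlapCos_of_dist_eq_add hr₁ hr₂ hr₃ hp₁ hp₂ hd
  have hfactor : 0 < (r₁ + r₂) / (2 * r₁ * r₂ * r₃) := by positivity
  have hθ₂₃' := Set.Ico_subset_Icc_self hθ₂₃
  have hθ₃₁' := Set.Ico_subset_Icc_self hθ₃₁
  refine ⟨(pi_le_add_iff_cos_add_nonpos hθ₂₃' hθ₃₁').2 ?_, ?_⟩
  · rw [hsum]
    exact mul_nonpos_of_nonneg_of_nonpos hfactor.le
      (sub_nonpos.2 (pow_le_pow_left₀ dist_nonneg hpD₃ 2))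
  · rw [add_eq_pi_iff_cos_add_eq_zero hθ₂₃' hθ₃₁', hsum, mul_eq_zero, or_iff_right hfactor.ne',
      sub_eq_zero, sq_eq_sq₀ dist_nonneg hr₃.le]

/-- Lemma 4.4 (second part): if two disks are externally tangent at a point `p`
contained in a third disk, then `θ₂₃ + θ₃₁ ≥ π`, with equality exactly when `p` lies
on the boundary circle of the third disk. -/
theorem overlap_angle_relation_tangent (z₁ z₂ z₃ : EuclideanSpace ℝ (Fin 2))
    (r₁ r₂ r₃ : ℝ) (hr₁ : 0 < r₁) (hr₂ : 0 < r₂) (hr₃ : 0 < r₃)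
    (h₂₃ : (closedBall z₂ r₂ ∩ closedBall z₃ r₃).Nonempty)
    (h₃₁ : (closedBall z₃ r₃ ∩ closedBall z₁ r₁).Nonempty)
    (θ₂₃ θ₃₁ : ℝ)
    (hθ₂₃ : θ₂₃ ∈ Set.Ico 0 π) (hθ₃₁ : θ₃₁ ∈ Set.Ico 0 π)
    (hcos₂₃ : cos θ₂₃ = (dist z₂ z₃ ^ 2 - r₂ ^ 2 - r₃ ^ 2) / (2 * r₂ * r₃))
    (hcos₃₁ : cos θ₃₁ = (dist z₃ z₁ ^ 2 - r₃ ^ 2 - r₁ ^ 2) / (2 * r₃ * r₁))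
    (p : EuclideanSpace ℝ (Fin 2))
    (hp : closedBall z₁ r₁ ∩ closedBall z₂ r₂ = {p})
    (hpD₃ : p ∈ closedBall z₃ r₃) :
    θ₂₃ + θ₃₁ ≥ π ∧ (θ₂₃ + θ₃₁ = π ↔ dist p z₃ = r₃) :=
  overlap_angle_relation_tangent_general z₁ z₂ z₃ r₁ r₂ r₃ hr₁ hr₂ hr₃ θ₂₃ θ₃₁ hθ₂₃ hθ₃₁ hcos₂₃
    hcos₃₁ p hp hpD₃
end

section
/- Let E be a nonempty finite set, and let A be a finite family of pairs of elements of E, B and C finite families of triples of elements of E, and Q a finite family of quadruples of elements of E. Define W₀ to be the set of functions Θ : E → (0,π) such that: Θ(e₁)+Θ(e₂) < π for every (e₁,e₂) ∈ A; Θ(e₁)+Θ(e₂)+Θ(e₃) > π, Θ(e₁)+Θ(e₂) < Θ(e₃)+π, Θ(e₂)+Θ(e₃) < Θ(e₁)+π, and Θ(e₃)+Θ(e₁) < Θ(e₂)+π for every (e₁,e₂,e₃) ∈ B; Θ(e₁)+Θ(e₂)+Θ(e₃) < π for every (e₁,e₂,e₃) ∈ C; and Θ(e₁)+Θ(e₂)+Θ(e₃)+Θ(e₄)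 < 2π for every (e₁,e₂,e₃,e₄) ∈ Q. If W₀ is nonempty, then W₀ ∩ (0,π/2)^E is nonempty, and moreover W₀ ∩ (0,π/2)^E has positive Lebesgue measure as a subset of ℝ^E. -/
/-!
Deform an admissible `Θ` towards the equilateral angle function by
`Θₛ = s Θ + (1 - s) π/3`. Every defining inequality of `W₀` holds at `Θ` and holds, possibly
with equality, at the constant `π/3`; hence it holds strictly at `Θₛ` for `0 < s ≤ 1`. For
`s < 1/4` all angles of `Θₛ` lie below `π/2`. Finally `W₀ ∩ (0, π/2)^E` is open, so containing
`Θₛ` it has positive Lebesgue measure.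
-/

open Real MeasureTheory

lemma combo_lt_of_lt_of_le {x y c s : ℝ} (hx : x < c) (hy : y ≤ c) (hs₀ : 0 < s)
    (hs₁ : s ≤ 1) : s * x + (1 - s) * y < c := by
  nlinarith

lemma lt_combo_of_lt_of_le {x y c s : ℝ} (hx : c < x) (hy : c ≤ y) (hs₀ : 0 < s)
    (hs₁ : s ≤ 1) : c < s * x + (1 - s) * y := by
  nlinarith

section Angles

variable {E : Type*}

def admissibleAngles (A : Finset (E × E)) (B C : Finset (E × E × E))
    (Q : Finset (E × E × E × E)) : Set (E → ℝ) :=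
  {Θ | (∀ e, Θ e ∈ Set.Ioo 0 π) ∧
    (∀ p ∈ A, Θ p.1 + Θ p.2 < π) ∧
    (∀ t ∈ B, Θ t.1 + Θ t.2.1 + Θ t.2.2 > π ∧
        Θ t.1 + Θ t.2.1 < Θ t.2.2 + π ∧
        Θ t.2.1 + Θ t.2.2 < Θ t.1 + π ∧
        Θ t.2.2 + Θ t.1 < Θ t.2.1 + π) ∧
    (∀ t ∈ C, Θ t.1 + Θ t.2.1 + Θ t.2.2 < π) ∧
    (∀ q ∈ Q, Θ q.1 + Θ q.2.1 + Θ q.2.2.1 + Θ q.2.2.2 < 2 * π)}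

def nonobtuseAngles : Set (E → ℝ) :=
  {Θ | ∀ e, Θ e ∈ Set.Ioo 0 (π / 2)}

noncomputable def angleDeformation (s : ℝ) (Θ : E → ℝ) : E → ℝ :=
  fun e => s * Θ e + (1 - s) * (π / 3)

lemma isOpen_admissibleAngles [Finite E] (A : Finset (E × E)) (B C : Finset (E × E × E))
    (Q : Finset (E × E × E × E)) : IsOpen (admissibleAngles A B C Q) := by
  simp only [admissibleAngles, Set.ofPred_and, Set.ofPred_forall, Set.mem_Ioo, gt_iff_lt]
  repeat' first
    | apply IsOpen.inter
    | apply isOpen_iInter_of_finite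
    | apply isOpen_biInter_finset
    | intro _
    | exact isOpen_lt (by fun_prop) (by fun_prop)

lemma isOpen_nonobtuseAngles [Finite E] : IsOpen (nonobtuseAngles : Set (E → ℝ)) := by
  simp only [nonobtuseAngles, Set.ofPred_forall]
  exact isOpen_iInter_of_finite fun e => isOpen_Ioo.preimage (continuous_apply e)

variable {s : ℝ} {Θ : E → ℝ}

lemma angleDeformation_mem_admissibleAngles {A : Finset (E × E)} {B C : Finset (E × E × E)}
    {Q : Finset (E × E × E × E)} (hΘ : Θ ∈ admissibleAngles A B C Q) (hs₀ : 0 < s)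
    (hs₁ : s ≤ 1) : angleDeformation s Θ ∈ admissibleAngles A B C Q := by
  obtain ⟨hI, hA, hB, hC, hQ⟩ := hΘ
  have hπ := pi_pos
  have hπ₃ : π / 3 ≤ π := by linarith
  refine ⟨fun e => ⟨?_, ?_⟩, fun p hp => ?_, fun t ht => ⟨?_, ?_, ?_, ?_⟩, fun t ht => ?_,
    fun q hq => ?_⟩ <;> simp only [angleDeformation]
  · exact lt_combo_of_lt_of_le (hI e).1 (by positivity) hs₀ hs₁
  · exact combo_lt_of_lt_of_le (hI e).2 hπ₃ hs₀ hs₁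
  · linarith [combo_lt_of_lt_of_le (hA p hp) (by linarith : 2 * π / 3 ≤ π) hs₀ hs₁]
  · linarith [lt_combo_of_lt_of_le (hB t ht).1 le_rfl hs₀ hs₁]
  · linarith [combo_lt_of_lt_of_le (sub_lt_iff_lt_add'.2 (hB t ht).2.1) hπ₃ hs₀ hs₁]
  · linarith [combo_lt_of_lt_of_le (sub_lt_iff_lt_add'.2 (hB t ht).2.2.1) hπ₃ hs₀ hs₁]
  · linarith [combo_lt_of_lt_of_le (sub_lt_iff_lt_add'.2 (hB t ht).2.2.2) hπ₃ hs₀ hs₁]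
  · linarith [combo_lt_of_lt_of_le (hC t ht) le_rfl hs₀ hs₁]
  · linarith [combo_lt_of_lt_of_le (hQ q hq) (by linarith : 4 * π / 3 ≤ 2 * π) hs₀ hs₁]

lemma angleDeformation_mem_nonobtuseAngles (hΘ : ∀ e, Θ e ∈ Set.Ioo 0 π) (hs₀ : 0 < s)
    (hs : s < 1 / 4) : angleDeformation s Θ ∈ nonobtuseAngles := by
  intro e
  have hπ := pi_pos
  refine ⟨lt_combo_of_lt_of_le (hΘ e).1 (by positivity) hs₀ (by linarith), ?_⟩
  have := mul_lt_mul_of_pos_left (hΘ e).2 hs₀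
  have := mul_lt_mul_of_pos_right hs hπ
  unfold angleDeformation
  linarith

end Angles

theorem W0_inter_nonobtuse_nonempty_posMeasure_general
    {E : Type*} [Fintype E]
    (A : Finset (E × E)) (B C : Finset (E × E × E)) (Q : Finset (E × E × E × E))
    (W₀ : Set (E → ℝ))
    (hW₀ : W₀ = {Θ | (∀ e, Θ e ∈ Set.Ioo 0 π) ∧
        (∀ p ∈ A, Θ p.1 + Θ p.2 < π) ∧
        (∀ t ∈ B, Θ t.1 + Θ t.2.1 + Θ t.2.2 > π ∧
            Θ t.1 + Θ t.2.1 < Θ t.2.2 + π ∧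
            Θ t.2.1 + Θ t.2.2 < Θ t.1 + π ∧
            Θ t.2.2 + Θ t.1 < Θ t.2.1 + π) ∧
        (∀ t ∈ C, Θ t.1 + Θ t.2.1 + Θ t.2.2 < π) ∧
        (∀ q ∈ Q, Θ q.1 + Θ q.2.1 + Θ q.2.2.1 + Θ q.2.2.2 < 2 * π)})
    (hne : W₀.Nonempty) :
    (W₀ ∩ {Θ | ∀ e, Θ e ∈ Set.Ioo 0 (π / 2)}).Nonempty ∧
    0 < volume (W₀ ∩ {Θ | ∀ e, Θ e ∈ Set.Ioo 0 (π / 2)}) := by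
  subst hW₀
  obtain ⟨Θ, hΘ⟩ := hne
  have hmem : angleDeformation (1 / 8) Θ ∈ admissibleAngles A B C Q ∩ nonobtuseAngles :=
    ⟨angleDeformation_mem_admissibleAngles hΘ (by norm_num) (by norm_num),
      angleDeformation_mem_nonobtuseAngles hΘ.1 (by norm_num) (by norm_num)⟩
  exact ⟨⟨_, hmem⟩, ((isOpen_admissibleAngles A B C Q).inter isOpen_nonobtuseAngles).measure_pos
    volume ⟨_, hmem⟩⟩

/-- Lemma 2.1: if the (open, convex-type) set `W₀` of admissible angle functions is
nonempty, then it contains non-obtuse angle functions, and the set of non-obtuse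
functions in `W₀` has positive Lebesgue measure in `ℝ^E`. -/
theorem W0_inter_nonobtuse_nonempty_posMeasure
    {E : Type*} [Fintype E] [Nonempty E]
    (A : Finset (E × E)) (B C : Finset (E × E × E)) (Q : Finset (E × E × E × E))
    (W₀ : Set (E → ℝ))
    (hW₀ : W₀ = {Θ | (∀ e, Θ e ∈ Set.Ioo 0 π) ∧
        (∀ p ∈ A, Θ p.1 + Θ p.2 < π) ∧
        (∀ t ∈ B, Θ t.1 + Θ t.2.1 + Θ t.2.2 > π ∧
            Θ t.1 + Θ t.2.1 < Θ t.2.2 + π ∧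
            Θ t.2.1 + Θ t.2.2 < Θ t.1 + π ∧
            Θ t.2.2 + Θ t.1 < Θ t.2.1 + π) ∧
        (∀ t ∈ C, Θ t.1 + Θ t.2.1 + Θ t.2.2 < π) ∧
        (∀ q ∈ Q, Θ q.1 + Θ q.2.1 + Θ q.2.2.1 + Θ q.2.2.2 < 2 * π)})
    (hne : W₀.Nonempty) :
    (W₀ ∩ {Θ | ∀ e, Θ e ∈ Set.Ioo 0 (π / 2)}).Nonempty ∧
    0 < volume (W₀ ∩ {Θ | ∀ e, Θ e ∈ Set.Ioo 0 (π / 2)}) :=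
  W0_inter_nonobtuse_nonempty_posMeasure_general A B C Q W₀ hW₀ hne
end
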